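/- arXiv:1807.08117 — 4 statements merged into one kernel-verified Lean document; each statement's English description precedes it below -/
import Mathlib

section
/- In the simple machine model, if u : μ → μ₁ (labeled m₁) and v : μ → μ₂ (labeled m₂) are two independent transitions from the same memory state μ, then there exists a unique memory state μ' such that m₂ is a valid transition from μ₁ to μ' and m₁ is a valid transition from μ₂ to μ' (existence and uniqueness of residuals / local confluence of independent transitions). -/
/-- Variable names. -/
abbrev Var := ℕ
/-- Memory locations. -/
abbrev Loc := ℕ
/-- Values (with `Loc ⊆ Val` via the canonical embedding `ℕ ⊆ ℤ`). -/
abbrev Val := ℤ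

/-- A memory state: a finite partial stack and a finite partial heap. -/
structure Mem where
  stack : Finmap (fun _ : Var => Val)
  heap : Finmap (fun _ : Loc => Val)

/-- The three instructions of the simple machine: `x := v`, `x := [ℓ]`, `[ℓ] := x`. -/
inductive Instr
  | assign (x : Var) (v : Val)
  | load (x : Var) (l : Loc)
  | store (l : Loc) (x : Var)

/-- Read footprint of an instruction, as a subset of `Var + Loc`. -/
def rdFP : Instr → Set (Var ⊕ Loc)
  | .assign _ _ => ∅
  | .load _ l => {Sum.inr l}
  | .store _ x => {Sum.inl x}

/-- Write footprint of an instruction, as a subset of `Var + Loc`. -/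
def wrFP : Instr → Set (Var ⊕ Loc)
  | .assign x _ => {Sum.inl x}
  | .load x _ => {Sum.inl x}
  | .store l _ => {Sum.inr l}

/-- Two transitions (identified by their instruction labels) are independent when
`(rd(u) ∪ wr(u)) ∩ wr(v) = ∅` and `wr(u) ∩ (rd(v) ∪ wr(v)) = ∅`. -/
def indep (m₁ m₂ : Instr) : Prop :=
  (rdFP m₁ ∪ wrFP m₁) ∩ wrFP m₂ = ∅ ∧ wrFP m₁ ∩ (rdFP m₂ ∪ wrFP m₂) = ∅

/-- The small-step transitions of the simple machine model. -/
inductive Step : Mem → Instr → Mem → Prop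
  | assign (s h x v) : Step ⟨s, h⟩ (.assign x v) ⟨s.insert x v, h⟩
  | load (s h x l v) : h.lookup l = some v → Step ⟨s, h⟩ (.load x l) ⟨s.insert x v, h⟩
  | store (s h l x v) : s.lookup x = some v → Step ⟨s, h⟩ (.store l x) ⟨s, h.insert l v⟩

/-!
Every instruction writes a single cell, with a value computed from its read footprint alone.
Independence says that neither transition writes the cell the other one writes or reads, so
each transition still computes the same value after the other one has fired, and the two
writes, going to different cells, commute.
-/

namespace Mem

def read (μ : Mem) : Var ⊕ Loc → Option Val
  | .inl x => μ.stack.lookup x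
  | .inr l => μ.heap.lookup l

def write (μ : Mem) : Var ⊕ Loc → Val → Mem
  | .inl x, v => ⟨μ.stack.insert x v, μ.heap⟩
  | .inr l, v => ⟨μ.stack, μ.heap.insert l v⟩

theorem read_write_of_ne (μ : Mem) {a b : Var ⊕ Loc} (v : Val) (h : a ≠ b) :
    (μ.write a v).read b = μ.read b := by
  rcases a with x | l <;> rcases b with y | k <;>
    simp_all [read, write, Finmap.lookup_insert_of_ne, eq_comm]

theorem write_comm (μ : Mem) {a b : Var ⊕ Loc} (v w : Val) (h : a ≠ b) :
    (μ.write a v).write b w = (μ.write b w).write a v := by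
  rcases a with x | l <;> rcases b with y | k <;>
    simp_all [write, Finmap.insert_insert_of_ne]

end Mem

namespace Instr

def target : Instr → Var ⊕ Loc
  | .assign x _ => .inl x
  | .load x _ => .inl x
  | .store l _ => .inr l

def value : Instr → Mem → Option Val
  | .assign _ v, _ => some v
  | .load _ l, μ => μ.read (.inr l)
  | .store _ x, μ => μ.read (.inl x)

theorem wrFP_eq_singleton_target (m : Instr) : wrFP m = {m.target} := by
  cases m <;> rfl

theorem value_write_of_notMem_rdFP (m : Instr) (μ : Mem) {a : Var ⊕ Loc} (v : Val)
    (h : a ∉ rdFP m) : m.value (μ.write a v) = m.value μ := by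
  cases m <;> simp_all [value, rdFP, Mem.read_write_of_ne]

end Instr

theorem step_iff {μ μ' : Mem} {m : Instr} :
    Step μ m μ' ↔ ∃ v, m.value μ = some v ∧ μ' = μ.write m.target v := by
  constructor
  · rintro (_ | ⟨_, _, _, _, v, hv⟩ | ⟨_, _, _, _, v, hv⟩)
    exacts [⟨_, rfl, rfl⟩, ⟨v, hv, rfl⟩, ⟨v, hv, rfl⟩]
  · obtain ⟨s, h⟩ := μ
    rintro ⟨v, hv, rfl⟩
    cases m with
    | assign x w => cases hv; exact .assign ..
    | load x l => exact .load _ _ _ _ _ hv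
    | store l x => exact .store _ _ _ _ _ hv

theorem Step.deterministic {μ μ' μ'' : Mem} {m : Instr} (h' : Step μ m μ') (h'' : Step μ m μ'') :
    μ' = μ'' := by
  obtain ⟨v', hv', rfl⟩ := step_iff.1 h'
  obtain ⟨v'', hv'', rfl⟩ := step_iff.1 h''
  rw [Option.some_inj.1 (hv'.symm.trans hv'')]

theorem indep_iff {m₁ m₂ : Instr} :
    indep m₁ m₂ ↔ m₁.target ≠ m₂.target ∧ m₂.target ∉ rdFP m₁ ∧ m₁.target ∉ rdFP m₂ := by
  simp only [indep, Instr.wrFP_eq_singleton_target, Set.eq_empty_iff_forall_notMem,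
    Set.mem_inter_iff, Set.mem_union, Set.mem_singleton_iff]
  grind

/-- Local confluence of independent transitions: if `u : μ →[m₁] μ₁` and
`v : μ →[m₂] μ₂` are independent, there is a unique memory state `μ'` with
`μ₁ →[m₂] μ'` and `μ₂ →[m₁] μ'` (existence and uniqueness of residuals). -/
theorem stmt4 (μ μ₁ μ₂ : Mem) (m₁ m₂ : Instr)
    (h₁ : Step μ m₁ μ₁) (h₂ : Step μ m₂ μ₂) (h : indep m₁ m₂) :
    ∃! μ' : Mem, Step μ₁ m₂ μ' ∧ Step μ₂ m₁ μ' := by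
  obtain ⟨v₁, hv₁, rfl⟩ := step_iff.1 h₁
  obtain ⟨v₂, hv₂, rfl⟩ := step_iff.1 h₂
  obtain ⟨hne, hrd₁, hrd₂⟩ := indep_iff.1 h
  have h₁₂ : Step (μ.write m₁.target v₁) m₂ ((μ.write m₁.target v₁).write m₂.target v₂) :=
    step_iff.2 ⟨v₂, by rwa [m₂.value_write_of_notMem_rdFP _ _ hrd₂], rfl⟩
  have h₂₁ : Step (μ.write m₂.target v₂) m₁ ((μ.write m₁.target v₁).write m₂.target v₂) :=
    step_iff.2 ⟨v₁, by rwa [m₁.value_write_of_notMem_rdFP _ _ hrd₁],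
      μ.write_comm v₁ v₂ hne⟩
  exact ⟨_, ⟨h₁₂, h₂₁⟩, fun μ' hμ' => hμ'.1.deterministic h₁₂⟩
end

section
/- The simple machine model graph G of memory states with permutation tiles given by independent transitions and their residuals is an asynchronous graph: it satisfies the symmetry axiom and the axiom that u·w₁ ⋄ v₁·u₁ and u·w₂ ⋄ v₂·u₂ implies v₁ = v₂ iff w₁ = w₂. -/
/-- A transition of the simple machine model graph `G`: a valid step together
with its source, instruction label and target. -/
structure MEdge where
  src : Mem
  instr : Instr
  tgt : Mem
  ok : Step src instr tgt

/-- Permutation tiles of the simple machine model: `u·v' ⋄ v·u'` holds when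
`u` and `v` are independent transitions from the common source, `u'` is the
residual of `u` after `v` (same instruction, from the target of `v` to the
common target) and `v'` is the residual of `v` after `u`. -/
def MDiamond (u v' v u' : MEdge) : Prop :=
  u.src = v.src ∧ v'.src = u.tgt ∧ u'.src = v.tgt ∧ v'.tgt = u'.tgt ∧
  v'.instr = v.instr ∧ u'.instr = u.instr ∧ indep u.instr v.instr

theorem Step.tgt_unique {m t₁ t₂ : Mem} {i : Instr} (h₁ : Step m i t₁) (h₂ : Step m i t₂) :
    t₁ = t₂ := by
  cases h₁ <;> cases h₂ <;> simp_all

theorem MEdge.ext_of_src_of_instr {a b : MEdge} (hs : a.src = b.src) (hi : a.instr = b.instr) :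
    a = b := by
  obtain ⟨src, instr, t₁, h₁⟩ := a
  obtain ⟨_, _, t₂, h₂⟩ := b
  cases hs
  cases hi
  cases h₁.tgt_unique h₂
  rfl

theorem indep.symm {m₁ m₂ : Instr} (h : indep m₁ m₂) : indep m₂ m₁ :=
  ⟨Set.inter_comm _ _ ▸ h.2, Set.inter_comm _ _ ▸ h.1⟩

theorem MDiamond.symm {u v' v u' : MEdge} (h : MDiamond u v' v u') : MDiamond v u' u v' :=
  let ⟨hsrc, hv', hu', htgt, hvi, hui, hind⟩ := h
  ⟨hsrc.symm, hu', hv', htgt.symm, hui, hvi, hind.symm⟩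

/-- The simple machine model, with permutation tiles given by independent
transitions and their residuals, is an asynchronous graph: the tile relation
is symmetric and satisfies the determinism axiom. -/
theorem stmt5 :
    (∀ u v' v u' : MEdge, MDiamond u v' v u' → MDiamond v u' u v') ∧
    (∀ u w₁ v₁ u₁ w₂ v₂ u₂ : MEdge,
      MDiamond u w₁ v₁ u₁ → MDiamond u w₂ v₂ u₂ → (v₁ = v₂ ↔ w₁ = w₂)) := by
  refine ⟨fun _ _ _ _ h => h.symm, ?_⟩
  rintro u w₁ v₁ u₁ w₂ v₂ u₂ ⟨hv₁, hw₁, -, -, hi₁, -, -⟩ ⟨hv₂, hw₂, -, -, hi₂, -, -⟩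
  constructor
  · rintro rfl
    exact MEdge.ext_of_src_of_instr (hw₁.trans hw₂.symm) (hi₁.trans hi₂.symm)
  · rintro rfl
    exact MEdge.ext_of_src_of_instr (hv₁.symm.trans hv₂) (hi₁.symm.trans hi₂)
end

section
/- The stateful-to-stateless map L from the simple machine model (G, ⋄_G) to (H, ⋄_H) is NOT a 2-fibration: there exists a path u·v' of length 2 in G and a permutation tile L(u)·L(v') ⋄_H b·a' in H which admits no lifting to a permutation tile u·v' ⋄_G v·u' in G with L(v) = b and L(u') = a'. (Witness: any path (x:=2)·(x:=3) in G and the tile in H permuting x:=2 and x:=3.) -/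
/-- Tiles of the stateless graph `H`: `a·b' ⋄ b·a'` for every pair of
instructions with `a = a'` and `b = b'`. -/
def HDiamond (u v' v u' : Instr) : Prop := u' = u ∧ v' = v

theorem not_indep_of_wrFP_inter_nonempty {a b : Instr} (h : (wrFP a ∩ wrFP b).Nonempty) :
    ¬ indep a b := by
  rintro ⟨hab, -⟩
  obtain ⟨p, hpa, hpb⟩ := h
  exact Set.eq_empty_iff_forall_notMem.1 hab p ⟨Or.inr hpa, hpb⟩

theorem wrFP_assign_inter_nonempty (x : Var) (v w : Val) :
    (wrFP (.assign x v) ∩ wrFP (.assign x w)).Nonempty :=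
  ⟨Sum.inl x, rfl, rfl⟩

theorem not_exists_mDiamond_of_wrFP_inter_nonempty {u v' : MEdge} {b : Instr}
    (h : (wrFP u.instr ∩ wrFP b).Nonempty) :
    ¬ ∃ v u' : MEdge, MDiamond u v' v u' ∧ v.instr = b := by
  rintro ⟨v, u', ⟨-, -, -, -, -, -, hindep⟩, rfl⟩
  exact not_indep_of_wrFP_inter_nonempty h hindep

def MEdge.assign (m : Mem) (x : Var) (v : Val) : MEdge :=
  ⟨m, .assign x v, ⟨m.stack.insert x v, m.heap⟩, Step.assign m.stack m.heap x v⟩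

/-- The stateful-to-stateless map `L` (sending an edge to its instruction
label) is NOT a 2-fibration: there is a length-2 path `u · v'` in `G`
(executing `x := 2` then `x := 3`) and a permutation tile
`L(u)·L(v') ⋄_H b·a'` in `H` (permuting the two assignments) that admits no
lifting to a permutation tile `u·v' ⋄_G v·u'` in `G` with `L(v) = b` and
`L(u') = a'`. -/
theorem stmt7 (x : Var) :
    ∃ u v' : MEdge, u.tgt = v'.src ∧
      u.instr = Instr.assign x 2 ∧ v'.instr = Instr.assign x 3 ∧
      HDiamond u.instr v'.instr v'.instr u.instr ∧
      ¬ ∃ v u' : MEdge, MDiamond u v' v u' ∧ v.instr = v'.instr ∧ u'.instr = u.instr := by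
  let u := MEdge.assign ⟨∅, ∅⟩ x 2
  let v' := MEdge.assign u.tgt x 3
  refine ⟨u, v', rfl, rfl, rfl, ⟨rfl, rfl⟩, ?_⟩
  rintro ⟨v, u', hdiamond, hv, -⟩
  exact not_exists_mDiamond_of_wrFP_inter_nonempty (wrFP_assign_inter_nonempty x 2 3)
    ⟨v, u', hdiamond, hv⟩
end

section
/- In a tile of a three-party parallel product situation: given two tiles in asynchronous graphs over separated states whose upper paths are compatible (arise as the left and right subjective projections of a common path of three-party separated states), the lower paths of the two tiles are again compatible and hence define a path in the parallel product G₁ ∥ G₂. -/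
/-- A partial cancellative commutative monoid of permissions. -/
structure PCM where
  P : Type
  mul : P → P → Option P
  mul_comm : ∀ a b, mul a b = mul b a
  mul_assoc : ∀ a b c, (mul a b).bind (fun d => mul d c) = (mul b c).bind (fun d => mul a d)
  cancel : ∀ a b c d, mul a b = some d → mul a c = some d → b = c

/-- A logical state: a partial function from addresses (`Var + Loc`) to pairs
of a value and a permission. -/
def LogState (A Val : Type) (M : PCM) := A → Option (Val × M.P)

/-- The separation product `σ * σ'` is defined when at every common point the
two states carry the same value and the product of the permissions is
defined. -/
def SepDefined {A Val : Type} {M : PCM} (σ σ' : LogState A Val M) : Prop :=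
  ∀ a v p w q, σ a = some (v, p) → σ' a = some (w, q) → v = w ∧ (M.mul p q).isSome

/-- Pointwise value of the separation product. -/
def sepAt {A Val : Type} {M : PCM} (σ σ' : LogState A Val M) (a : A) :
    Option (Val × M.P) :=
  match σ a, σ' a with
  | some (v, p), some (_, q) => (M.mul p q).map (fun r => (v, r))
  | some vp, none => some vp
  | none, o => o

/-- The (partial) separation product of logical states. -/
noncomputable def sep {A Val : Type} {M : PCM} (σ σ' : LogState A Val M) :
    Option (LogState A Val M) :=
  haveI : Decidable (SepDefined σ σ') := Classical.propDecidable _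
  if SepDefined σ σ' then some (fun a => sepAt σ σ' a) else none

/-- The empty logical state (unit of the separation product). -/
def emptyLS {A Val : Type} {M : PCM} : LogState A Val M := fun _ => none

/-- Iterated (partial) separation product of a list of logical states. -/
noncomputable def bigSep {A Val : Type} {M : PCM} (l : List (LogState A Val M)) :
    Option (LogState A Val M) :=
  l.foldr (fun σ o => o.bind (fun τ => sep σ τ)) (some emptyLS)

/-- The combined logical state `σ_C * (∗_{r ∈ dom σ⃗} σ⃗(r)) * σ_F` of a
separated state, when defined. Here `Sum.inr true` stands for a lock held by
the Code and `Sum.inr false` for a lock held by the Frame. -/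
noncomputable def combine? {A Val L : Type} [Fintype L] {M : PCM}
    (σC : LogState A Val M) (f : L → LogState A Val M ⊕ Bool)
    (σF : LogState A Val M) : Option (LogState A Val M) :=
  (bigSep ((Finset.univ : Finset L).toList.filterMap (fun r => (f r).getLeft?))).bind
    (fun mid => (sep σC mid).bind (fun t => sep t σF))

/-- Permission erasure, sending a logical state to its underlying memory state. -/
def eraseP {A Val : Type} {M : PCM} (σ : LogState A Val M) : A → Option Val :=
  fun a => (σ a).map Prod.fst

/-- A footprint over addresses `A` and locks `L`: read/write areas, touched
locks, allocated/deallocated addresses. -/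
structure SFootprint (A L : Type) where
  rd : Set A
  wr : Set A
  lock : Set L
  alloc : Set A

/-- Independence of footprints. -/
def SFIndep {A L : Type} (ρ ρ' : SFootprint A L) : Prop :=
  (ρ.rd ∪ ρ.wr) ∩ ρ'.wr = ∅ ∧ (ρ'.rd ∪ ρ'.wr) ∩ ρ.wr = ∅ ∧
  ρ.lock ∩ ρ'.lock = ∅ ∧ ρ.alloc ∩ ρ'.alloc = ∅

/-- A separated state candidate `(σ_C, σ⃗, σ_F)`: Code state, lock states
(`Sum.inr true` = held by Code, `Sum.inr false` = held by Frame), Frame state. -/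
def SepTriple (A Val L : Type) (M : PCM) : Type :=
  LogState A Val M × (L → LogState A Val M ⊕ Bool) × LogState A Val M

/-- The separated state `x` combines into the machine state `ms = (μ, L)`. -/
def CombinesTo {A Val L : Type} [Fintype L] {M : PCM}
    (x : SepTriple A Val L M) (ms : (A → Option Val) × Set L) : Prop :=
  ∃ τ, combine? x.1 x.2.1 x.2.2 = some τ ∧
    ms = (eraseP τ, {r | x.2.1 r = Sum.inr true} ∪ {r | x.2.1 r = Sum.inr false})

/-- Eve (Code) transitions of the machine model of separated states, relative
to an abstract instruction set `I` with footprints `fp` and machine-step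
relation `mstep` on machine states: the Frame component is unchanged, the
combined machine states are related by the instruction, the Code component is
unchanged outside the write area, the read and write areas lie in the domain
of the Code component, the touched locks are free or held by the Code, and
the lock states are unchanged outside the touched locks. -/
def EveStep {A Val L I : Type} [Fintype L] {M : PCM}
    (fp : I → SFootprint A L)
    (mstep : I → ((A → Option Val) × Set L) → ((A → Option Val) × Set L) → Prop)
    (m : I) (x y : SepTriple A Val L M) : Prop :=
  x.2.2 = y.2.2 ∧
  (∃ ms ms', CombinesTo x ms ∧ CombinesTo y ms' ∧ mstep m ms ms') ∧
  (∀ a, a ∉ (fp m).wr → x.1 a = y.1 a) ∧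
  ((fp m).wr ∪ (fp m).rd ⊆ {a | (x.1 a).isSome}) ∧
  ((fp m).lock ⊆ {r | (x.2.1 r).isLeft = true ∨ x.2.1 r = Sum.inr true}) ∧
  (∀ r, r ∉ (fp m).lock → x.2.1 r = y.2.1 r)

/-- Adam (Frame) transitions of the machine model of separated states: dual to
Eve transitions, with the Code component unchanged. -/
def AdamStep {A Val L I : Type} [Fintype L] {M : PCM}
    (fp : I → SFootprint A L)
    (mstep : I → ((A → Option Val) × Set L) → ((A → Option Val) × Set L) → Prop)
    (m : I) (x y : SepTriple A Val L M) : Prop :=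
  x.1 = y.1 ∧
  (∃ ms ms', CombinesTo x ms ∧ CombinesTo y ms' ∧ mstep m ms ms') ∧
  (∀ a, a ∉ (fp m).wr → x.2.2 a = y.2.2 a) ∧
  ((fp m).wr ∪ (fp m).rd ⊆ {a | (x.2.2 a).isSome}) ∧
  ((fp m).lock ⊆ {r | (x.2.1 r).isLeft = true ∨ x.2.1 r = Sum.inr false}) ∧
  (∀ r, r ∉ (fp m).lock → x.2.1 r = y.2.1 r)

/-- Ownership marks of a three-party separated state: Code 1, Code 2, Frame. -/
inductive Own3
  | c1
  | c2
  | fr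

/-- A three-party separated state candidate `(σ₁, σ₂, σ⃗*, σ_F)`. -/
def ThreeTriple (A Val L : Type) (M : PCM) : Type :=
  LogState A Val M × LogState A Val M ×
    (L → LogState A Val M ⊕ Own3) × LogState A Val M

/-- The combined logical state `σ₁ * σ₂ * (∗_r σ⃗*(r)) * σ_F` of a three-party
separated state, when defined. -/
noncomputable def combine3? {A Val L : Type} [Fintype L] {M : PCM}
    (y : ThreeTriple A Val L M) : Option (LogState A Val M) :=
  (bigSep ((Finset.univ : Finset L).toList.filterMap
      (fun r => (y.2.2.1 r).getLeft?))).bind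
    (fun mid => (sep y.1 y.2.1).bind
      (fun s => (sep s mid).bind (fun t => sep t y.2.2.2)))

/-- Lock-state relabeling for the left subjective projection: `C₁ ↦ C`,
`C₂ ↦ F`, `F ↦ F`. -/
def remap1 {A Val : Type} {M : PCM} :
    LogState A Val M ⊕ Own3 → LogState A Val M ⊕ Bool
  | .inl σ => .inl σ
  | .inr .c1 => .inr true
  | .inr _ => .inr false

/-- Lock-state relabeling for the right subjective projection: `C₂ ↦ C`,
`C₁ ↦ F`, `F ↦ F`. -/
def remap2 {A Val : Type} {M : PCM} :
    LogState A Val M ⊕ Own3 → LogState A Val M ⊕ Bool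
  | .inl σ => .inl σ
  | .inr .c2 => .inr true
  | .inr _ => .inr false

/-- `x` is the left subjective projection `λ₁(y)`:
`x = (σ₁, σ⃗*[C₁↦C, C₂↦F], σ_F * σ₂)`. -/
def Proj1 {A Val L : Type} {M : PCM}
    (y : ThreeTriple A Val L M) (x : SepTriple A Val L M) : Prop :=
  x.1 = y.1 ∧ x.2.1 = (fun r => remap1 (y.2.2.1 r)) ∧ sep y.2.2.2 y.2.1 = some x.2.2

/-- `x` is the right subjective projection `λ₂(y)`:
`x = (σ₂, σ⃗*[C₁↦F, C₂↦C], σ_F * σ₁)`. -/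
def Proj2 {A Val L : Type} {M : PCM}
    (y : ThreeTriple A Val L M) (x : SepTriple A Val L M) : Prop :=
  x.1 = y.2.1 ∧ x.2.1 = (fun r => remap2 (y.2.2.1 r)) ∧ sep y.2.2.2 y.1 = some x.2.2

/-- Two separated states are compatible when they are the two subjective
projections of a common (well-defined) three-party separated state. -/
def Compatible {A Val L : Type} [Fintype L] {M : PCM}
    (x₁ x₂ : SepTriple A Val L M) : Prop :=
  ∃ y : ThreeTriple A Val L M,
    (combine3? y).isSome ∧ Proj1 y x₁ ∧ Proj2 y x₂

/-- A move of given polarity (`true` = Eve/Code, `false` = Adam/Frame). -/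
def Move {A Val L I : Type} [Fintype L] {M : PCM}
    (fp : I → SFootprint A L)
    (mstep : I → ((A → Option Val) × Set L) → ((A → Option Val) × Set L) → Prop)
    (pol : Bool) (m : I) (x y : SepTriple A Val L M) : Prop :=
  if pol then EveStep fp mstep m x y else AdamStep fp mstep m x y

/-- A permutation tile over the machine model of separated states: the square
`x → y → z  ⋄  x → y' → z` where the two instructions have independent
footprints and opposite sides carry the same instruction and polarity. -/
def STile {A Val L I : Type} [Fintype L] {M : PCM}
    (fp : I → SFootprint A L)
    (mstep : I → ((A → Option Val) × Set L) → ((A → Option Val) × Set L) → Prop)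
    (pol pol' : Bool) (m m' : I) (x y z y' : SepTriple A Val L M) : Prop :=
  Move fp mstep pol m x y ∧ Move fp mstep pol' m' y z ∧
  Move fp mstep pol' m' x y' ∧ Move fp mstep pol m y' z ∧
  SFIndep (fp m) (fp m')

/-!
Because the footprints of `m` and `m'` are independent, the lower middle state `y'` of a tile
agrees with `z` on the write area and the locks of `m'` and with `x` everywhere else. Patching
the three-party witnesses of the compatibility of `x₁, x₂` and of `z₁, z₂` in the same way gives
a three-party state whose two projections are `y₁'` and `y₂'`; its combined state is that of
`y₁'`, which is defined since `y₁'` is the target of a move. Definedness of iterated separation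
products is checked address by address, in the commutative monoid of cells.
-/

section Cells

variable {Val : Type} {M : PCM}

/-- The value of a logical state at one address, with an extra absorbing element `none` for an
undefined separation product; `some none` is the empty cell. -/
abbrev Cell (Val : Type) (M : PCM) : Type := Option (Option (Val × M.P))

open Classical in
noncomputable def cellMul : Option (Val × M.P) → Option (Val × M.P) → Cell Val M
  | none, d => some d
  | some c, none => some (some c)
  | some (v, p), some (w, q) => if v = w then (M.mul p q).map fun r => some (v, r) else none

@[simp] theorem cellMul_none_left (d : Option (Val × M.P)) : cellMul none d = some d := rfl

@[simp] theorem cellMul_none_right (c : Option (Val × M.P)) : cellMul c none = some c := by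
  rcases c with _ | ⟨v, p⟩ <;> rfl

open Classical in
@[simp] theorem cellMul_some_some (v w : Val) (p q : M.P) :
    cellMul (some (v, p)) (some (w, q)) =
      if v = w then (M.mul p q).map fun r => some (v, r) else none := rfl

theorem cellMul_comm (c d : Option (Val × M.P)) : cellMul c d = cellMul d c := by
  rcases c with _ | ⟨v, p⟩ <;> rcases d with _ | ⟨w, q⟩ <;> simp only [cellMul_none_left,
    cellMul_none_right, cellMul_some_some]
  rw [M.mul_comm]
  by_cases h : v = w <;> simp [h, eq_comm]

noncomputable def Cell.mul (x y : Cell Val M) : Cell Val M :=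
  x.bind fun c => y.bind fun d => cellMul c d

theorem Cell.mul_assoc (x y z : Cell Val M) :
    Cell.mul (Cell.mul x y) z = Cell.mul x (Cell.mul y z) := by
  rcases x with _ | _ | ⟨u, p⟩ <;> rcases y with _ | _ | ⟨v, q⟩ <;>
    rcases z with _ | _ | ⟨w, r⟩ <;>
    simp only [Cell.mul, Option.bind_none, Option.bind_fun_none, Option.bind_some,
      Option.bind_fun_some, cellMul_none_left, cellMul_none_right, cellMul_some_some]
  -- three non-empty cells: with equal values this is the associativity of `M.mul`
  have h := M.mul_assoc p q r
  by_cases huv : u = v <;> by_cases hvw : v = w <;> subst_vars <;>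
    cases hpq : M.mul p q <;> cases hqr : M.mul q r <;>
    simp only [hpq, hqr, Option.bind_none, Option.bind_some] at h <;>
    first | (simp [*]; done) | simp [h.symm]

noncomputable instance : CommMonoid (Cell Val M) where
  mul := Cell.mul
  one := some none
  mul_assoc := Cell.mul_assoc
  mul_comm x y := by
    show Cell.mul x y = Cell.mul y x
    rcases x with _ | c <;> rcases y with _ | d <;> simp [Cell.mul, cellMul_comm]
  one_mul x := by rcases x with _ | c <;> rfl
  mul_one x := by
    show Cell.mul x (some none) = x
    rcases x with _ | c <;> simp [Cell.mul]

@[simp] theorem Cell.none_mul (x : Cell Val M) : (none : Cell Val M) * x = none := rfl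

@[simp] theorem Cell.mul_none (x : Cell Val M) : x * (none : Cell Val M) = none := by
  cases x <;> rfl

theorem Cell.some_mul_some (c d : Option (Val × M.P)) :
    (some c : Cell Val M) * some d = cellMul c d := rfl

end Cells

section HasCells

variable {A Val : Type} {M : PCM}

theorem cellMul_eq_some_iff {σ σ' : LogState A Val M} {a : A} {e : Option (Val × M.P)} :
    cellMul (σ a) (σ' a) = some e ↔
      (∀ v p w q, σ a = some (v, p) → σ' a = some (w, q) → v = w ∧ (M.mul p q).isSome) ∧
        sepAt σ σ' a = e := by
  unfold sepAt
  rcases σ a with _ | ⟨v, p⟩ <;> rcases σ' a with _ | ⟨w, q⟩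
  · simp
  · simp
  · simp
  · by_cases hvw : v = w
    · subst hvw
      cases h : M.mul p q <;> aesop
    · simp [hvw]

theorem sep_eq_some_iff {σ σ' τ : LogState A Val M} :
    sep σ σ' = some τ ↔ ∀ a, (some (σ a) : Cell Val M) * some (σ' a) = some (τ a) := by
  simp only [Cell.some_mul_some, cellMul_eq_some_iff]
  unfold sep
  split_ifs with hd
  · refine ⟨?_, fun h => congrArg some (funext fun a => (h a).2)⟩
    rintro ⟨⟩
    exact fun a => ⟨hd a, rfl⟩
  · exact ⟨nofun, fun h => hd fun a => (h a).1⟩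

def HasCells (o : Option (LogState A Val M)) (F : A → Cell Val M) : Prop :=
  ∀ τ, o = some τ ↔ ∀ a, F a = some (τ a)

theorem hasCells_some (σ : LogState A Val M) : HasCells (some σ) fun a => some (σ a) :=
  fun _ => ⟨fun h _ => by cases h; rfl,
    fun h => congrArg some (funext fun a => Option.some_inj.mp (h a))⟩

theorem hasCells_sep (σ σ' : LogState A Val M) :
    HasCells (sep σ σ') fun a => some (σ a) * some (σ' a) :=
  fun _ => sep_eq_some_iff

theorem HasCells.unique {o o' : Option (LogState A Val M)} {F : A → Cell Val M}
    (h : HasCells o F) (h' : HasCells o' F) : o = o' := by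
  cases o with
  | some τ => exact ((h' τ).mpr ((h τ).mp rfl)).symm
  | none =>
    cases o' with
    | none => rfl
    | some τ => exact absurd ((h τ).mpr ((h' τ).mp rfl)) nofun

theorem exists_logState_of_ne_none {F : A → Cell Val M} (hF : ∀ a, F a ≠ none) :
    ∃ σ : LogState A Val M, ∀ a, F a = some (σ a) :=
  ⟨fun a => (F a).get (Option.isSome_iff_ne_none.mpr (hF a)), fun a => by simp⟩

theorem HasCells.bind_sep {o o' : Option (LogState A Val M)} {F G : A → Cell Val M}
    (h : HasCells o F) (h' : HasCells o' G) :
    HasCells (o.bind fun s => o'.bind fun t => sep s t) fun a => F a * G a := by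
  intro τ
  dsimp only
  constructor
  · intro hτ a
    obtain ⟨s, hs, hτ⟩ := Option.bind_eq_some_iff.mp hτ
    obtain ⟨t, ht, hτ⟩ := Option.bind_eq_some_iff.mp hτ
    rw [(h s).mp hs a, (h' t).mp ht a]
    exact sep_eq_some_iff.mp hτ a
  · intro hτ
    obtain ⟨s, hs⟩ := exists_logState_of_ne_none (F := F) fun a e => by simpa [e] using hτ a
    obtain ⟨t, ht⟩ := exists_logState_of_ne_none (F := G) fun a e => by simpa [e] using hτ a
    rw [(h s).mpr hs, Option.bind_some, (h' t).mpr ht, Option.bind_some, sep_eq_some_iff]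
    intro a
    rw [← hs a, ← ht a]
    exact hτ a

noncomputable def cellProd (l : List (LogState A Val M)) (a : A) : Cell Val M :=
  (l.map fun σ => (some (σ a) : Cell Val M)).prod

theorem hasCells_bigSep (l : List (LogState A Val M)) : HasCells (bigSep l) (cellProd l) := by
  induction l with
  | nil => exact hasCells_some emptyLS
  | cons σ l ih => exact (hasCells_some σ).bind_sep ih

noncomputable def lockStates {L β : Type} [Fintype L] (f : L → LogState A Val M ⊕ β) :
    List (LogState A Val M) :=
  (Finset.univ : Finset L).toList.filterMap fun r => (f r).getLeft?

theorem hasCells_combine? {L : Type} [Fintype L] (σC : LogState A Val M)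
    (f : L → LogState A Val M ⊕ Bool) (σF : LogState A Val M) :
    HasCells (combine? σC f σF)
      fun a => some (σC a) * cellProd (lockStates f) a * some (σF a) := by
  have h := ((hasCells_some σC).bind_sep (hasCells_bigSep (lockStates f))).bind_sep
    (hasCells_some σF)
  convert h using 1
  simp only [combine?, lockStates, Option.bind_some, Option.bind_assoc]

theorem hasCells_combine3? {L : Type} [Fintype L] (y : ThreeTriple A Val L M) :
    HasCells (combine3? y) fun a =>
      some (y.1 a) * some (y.2.1 a) * cellProd (lockStates y.2.2.1) a * some (y.2.2.2 a) := by
  have h := ((hasCells_sep y.1 y.2.1).bind_sep (hasCells_bigSep (lockStates y.2.2.1))).bind_sep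
    (hasCells_some y.2.2.2)
  convert h using 1
  simp only [combine3?, lockStates, Option.bind_some, Option.bind_assoc]
  exact Option.bind_comm _ _

theorem lockStates_remap1 {L : Type} [Fintype L] (f : L → LogState A Val M ⊕ Own3) :
    lockStates (fun r => remap1 (f r)) = lockStates f := by
  unfold lockStates
  congr 1
  funext r
  dsimp only
  rcases f r with σ | (_ | _ | _) <;> rfl

theorem Proj1.combine3?_eq {L : Type} [Fintype L] {y : ThreeTriple A Val L M}
    {x : SepTriple A Val L M} (h : Proj1 y x) : combine3? y = combine? x.1 x.2.1 x.2.2 := by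
  obtain ⟨h₁, h₂, h₃⟩ := h
  refine (hasCells_combine3? y).unique ?_
  convert hasCells_combine? x.1 x.2.1 x.2.2 using 1
  funext a
  rw [h₁, h₂, lockStates_remap1, ← sep_eq_some_iff.mp h₃ a]
  ac_rfl

end HasCells

section Piecewise

variable {A Val L : Type} {M : PCM}

theorem eq_piecewise_of_forall {α β : Type*} {s : Set α} [∀ a, Decidable (a ∈ s)]
    {f g h : α → β} (hf : ∀ a ∈ s, h a = f a) (hg : ∀ a ∉ s, h a = g a) :
    h = s.piecewise f g :=
  funext fun a => by by_cases ha : a ∈ s <;> simp [ha, hf, hg]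

theorem sep_piecewise {W : Set A} [∀ a, Decidable (a ∈ W)] {σ σ' τ ρ ρ' π : LogState A Val M}
    (h : sep σ σ' = some τ) (h' : sep ρ ρ' = some π) :
    sep (W.piecewise σ ρ) (W.piecewise σ' ρ') = some (W.piecewise τ π) := by
  rw [sep_eq_some_iff] at h h'
  refine sep_eq_some_iff.mpr fun a => ?_
  by_cases ha : a ∈ W <;> simp only [Set.piecewise, ha, if_true, if_false]
  exacts [h a, h' a]

open Classical in
noncomputable def SepTriple.piecewise (W : Set A) (K : Set L) (x x' : SepTriple A Val L M) :
    SepTriple A Val L M :=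
  (W.piecewise x.1 x'.1, K.piecewise x.2.1 x'.2.1, W.piecewise x.2.2 x'.2.2)

open Classical in
noncomputable def ThreeTriple.piecewise (W : Set A) (K : Set L) (y y' : ThreeTriple A Val L M) :
    ThreeTriple A Val L M :=
  (W.piecewise y.1 y'.1, W.piecewise y.2.1 y'.2.1, K.piecewise y.2.2.1 y'.2.2.1,
    W.piecewise y.2.2.2 y'.2.2.2)

variable {W : Set A} {K : Set L} {y y' : ThreeTriple A Val L M} {x x' : SepTriple A Val L M}

open Classical in
theorem Proj1.piecewise (h : Proj1 y x) (h' : Proj1 y' x') :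
    Proj1 (ThreeTriple.piecewise W K y y') (SepTriple.piecewise W K x x') := by
  obtain ⟨h₁, h₂, h₃⟩ := h
  obtain ⟨h₁', h₂', h₃'⟩ := h'
  refine ⟨by simp only [SepTriple.piecewise, ThreeTriple.piecewise, h₁, h₁']; rfl, ?_,
    sep_piecewise h₃ h₃'⟩
  simp only [SepTriple.piecewise, ThreeTriple.piecewise, h₂, h₂']
  exact Set.piecewise_op _ _ _ (fun _ => remap1)

open Classical in
theorem Proj2.piecewise (h : Proj2 y x) (h' : Proj2 y' x') :
    Proj2 (ThreeTriple.piecewise W K y y') (SepTriple.piecewise W K x x') := by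
  obtain ⟨h₁, h₂, h₃⟩ := h
  obtain ⟨h₁', h₂', h₃'⟩ := h'
  refine ⟨by simp only [SepTriple.piecewise, ThreeTriple.piecewise, h₁, h₁']; rfl, ?_,
    sep_piecewise h₃ h₃'⟩
  simp only [SepTriple.piecewise, ThreeTriple.piecewise, h₂, h₂']
  exact Set.piecewise_op _ _ _ (fun _ => remap2)

end Piecewise

section Moves

variable {A Val L I : Type} [Fintype L] {M : PCM} {fp : I → SFootprint A L}
  {mstep : I → ((A → Option Val) × Set L) → ((A → Option Val) × Set L) → Prop}
  {pol pol' : Bool} {m m' : I}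

omit [Fintype L] in
theorem SFIndep.notMem_wr_of_mem_wr {ρ ρ' : SFootprint A L} (h : SFIndep ρ ρ') {a : A}
    (ha : a ∈ ρ'.wr) : a ∉ ρ.wr :=
  fun ha' => (Set.eq_empty_iff_forall_notMem.mp h.2.1) a ⟨Or.inr ha, ha'⟩

omit [Fintype L] in
theorem SFIndep.notMem_lock_of_mem_lock {ρ ρ' : SFootprint A L} (h : SFIndep ρ ρ') {r : L}
    (hr : r ∈ ρ'.lock) : r ∉ ρ.lock :=
  fun hr' => (Set.eq_empty_iff_forall_notMem.mp h.2.2.1) r ⟨hr', hr⟩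

variable {u v : SepTriple A Val L M}

theorem Move.code_eq (h : Move fp mstep pol m u v) {a : A} (ha : a ∉ (fp m).wr) :
    u.1 a = v.1 a := by
  cases pol
  exacts [congrFun h.1 a, h.2.2.1 a ha]

theorem Move.frame_eq (h : Move fp mstep pol m u v) {a : A} (ha : a ∉ (fp m).wr) :
    u.2.2 a = v.2.2 a := by
  cases pol
  exacts [h.2.2.1 a ha, congrFun h.1 a]

theorem Move.lock_eq (h : Move fp mstep pol m u v) {r : L} (hr : r ∉ (fp m).lock) :
    u.2.1 r = v.2.1 r := by
  cases pol
  exacts [h.2.2.2.2.2 r hr, h.2.2.2.2.2 r hr]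

theorem Move.isSome_combine? (h : Move fp mstep pol m u v) :
    (combine? v.1 v.2.1 v.2.2).isSome := by
  have hc : ∃ ms ms', CombinesTo u ms ∧ CombinesTo v ms' ∧ mstep m ms ms' := by
    cases pol
    exacts [h.2.1, h.2.1]
  obtain ⟨_, _, -, ⟨τ, hτ, -⟩, -⟩ := hc
  exact Option.isSome_iff_exists.mpr ⟨τ, hτ⟩

variable {x y z y' : SepTriple A Val L M}

theorem STile.lower_eq_piecewise (t : STile fp mstep pol pol' m m' x y z y') :
    y' = SepTriple.piecewise (fp m').wr (fp m').lock z x := by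
  classical
  obtain ⟨-, -, hxy', hy'z, hind⟩ := t
  refine Prod.ext ?_ (Prod.ext ?_ ?_) <;> refine eq_piecewise_of_forall ?_ ?_
  · exact fun a ha => hy'z.code_eq (hind.notMem_wr_of_mem_wr ha)
  · exact fun a ha => (hxy'.code_eq ha).symm
  · exact fun r hr => hy'z.lock_eq (hind.notMem_lock_of_mem_lock hr)
  · exact fun r hr => (hxy'.lock_eq hr).symm
  · exact fun a ha => hy'z.frame_eq (hind.notMem_wr_of_mem_wr ha)
  · exact fun a ha => (hxy'.frame_eq ha).symm

theorem STile.isSome_combine?_lower (t : STile fp mstep pol pol' m m' x y z y') :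
    (combine? y'.1 y'.2.1 y'.2.2).isSome :=
  t.2.2.1.isSome_combine?

end Moves

theorem stmt17_general {A Val L I : Type} [Fintype L] {M : PCM}
    (fp : I → SFootprint A L)
    (mstep : I → ((A → Option Val) × Set L) → ((A → Option Val) × Set L) → Prop)
    (pol pol' : Bool) (m m' : I)
    (x₁ y₁ z₁ y₁' x₂ y₂ z₂ y₂' : SepTriple A Val L M)
    (t₁ : STile fp mstep pol pol' m m' x₁ y₁ z₁ y₁')
    (t₂ : STile fp mstep (!pol) (!pol') m m' x₂ y₂ z₂ y₂')
    (cx : Compatible x₁ x₂) (cz : Compatible z₁ z₂) :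
    Compatible y₁' y₂' := by
  obtain ⟨wx, -, hx₁, hx₂⟩ := cx
  obtain ⟨wz, -, hz₁, hz₂⟩ := cz
  have hy₁ : Proj1 (ThreeTriple.piecewise (fp m').wr (fp m').lock wz wx) y₁' :=
    t₁.lower_eq_piecewise ▸ hz₁.piecewise hx₁
  have hy₂ : Proj2 (ThreeTriple.piecewise (fp m').wr (fp m').lock wz wx) y₂' :=
    t₂.lower_eq_piecewise ▸ hz₂.piecewise hx₂
  refine ⟨_, ?_, hy₁, hy₂⟩
  rw [hy₁.combine3?_eq]
  exact t₁.isSome_combine?_lower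

/-- Given two tiles over separated states whose upper paths are compatible
(same instruction labels, dual polarities, and pointwise compatible states),
the middle states of the lower paths are again compatible — hence the lower
paths define a path in the parallel product `G₁ ∥ G₂`. -/
theorem stmt17 {A Val L I : Type} [Fintype L] {M : PCM}
    (fp : I → SFootprint A L)
    (mstep : I → ((A → Option Val) × Set L) → ((A → Option Val) × Set L) → Prop)
    (pol pol' : Bool) (m m' : I)
    (x₁ y₁ z₁ y₁' x₂ y₂ z₂ y₂' : SepTriple A Val L M)
    (t₁ : STile fp mstep pol pol' m m' x₁ y₁ z₁ y₁')
    (t₂ : STile fp mstep (!pol) (!pol') m m' x₂ y₂ z₂ y₂')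
    (cx : Compatible x₁ x₂) (cy : Compatible y₁ y₂) (cz : Compatible z₁ z₂) :
    Compatible y₁' y₂' :=
  stmt17_general fp mstep pol pol' m m' x₁ y₁ z₁ y₁' x₂ y₂ z₂ y₂' t₁ t₂ cx cz
end
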